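/- arXiv:2509.06583 — 5 statements merged into one kernel-verified Lean document; each statement's English description precedes it below -/
import Mathlib

section
/- Let N ∈ {2,3}, α = 4 − N, m₁, m₂ > 0, and ω ∈ ℝ with ω² < min{m₁², m₂²/4}. Let 𝛗_ω = (φ₁,φ₂) be a ground-state pair and 𝛙_ω = (iωφ₁, 2iωφ₂). If an admissible pair 𝐮 and a pair 𝐯 of square-integrable functions satisfy Q(𝐮,𝐯) = Q(𝛗_ω,𝛙_ω) and L(𝐮) = L(𝛗_ω), then E(𝛗_ω,𝛙_ω) ≤ E(𝐮,𝐯). -/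
open MeasureTheory Complex

noncomputable section

/-- The spatial domain `ℝ^N`. -/
abbrev Sp (N : ℕ) := EuclideanSpace ℝ (Fin N)

/-- Square of the `L²` norm: `‖u‖_{L²}²`. -/
def nsq {N : ℕ} (u : Sp N → ℂ) : ℝ := ∫ x, ‖u x‖ ^ 2

/-- Square of the `L²` norm of the gradient: `‖∇u‖_{L²}²`. -/
def gsq {N : ℕ} (u : Sp N → ℂ) : ℝ := ∫ x, ‖fderiv ℝ u x‖ ^ 2

/-- An admissible pair: differentiable components, with `u_j`, `|∇u_j|`
square-integrable and `|u₁|²|u₂|` integrable. -/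
def Admissible {N : ℕ} (u : (Sp N → ℂ) × (Sp N → ℂ)) : Prop :=
  Differentiable ℝ u.1 ∧ Differentiable ℝ u.2 ∧
  MemLp u.1 2 volume ∧ MemLp u.2 2 volume ∧
  Integrable (fun x => ‖fderiv ℝ u.1 x‖ ^ 2) ∧
  Integrable (fun x => ‖fderiv ℝ u.2 x‖ ^ 2) ∧
  Integrable (fun x => ‖u.1 x‖ ^ 2 * ‖u.2 x‖)

/-- A pair of square-integrable functions. -/
def SqInt {N : ℕ} (v : (Sp N → ℂ) × (Sp N → ℂ)) : Prop :=
  MemLp v.1 2 volume ∧ MemLp v.2 2 volume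

/-- The interaction term `G(𝐮) = Re ∫ u₁² conj u₂`. -/
def Gfun {N : ℕ} (u : (Sp N → ℂ) × (Sp N → ℂ)) : ℝ :=
  (∫ x, (u.1 x) ^ 2 * starRingEnd ℂ (u.2 x)).re

/-- `L(𝐮) = -(1/2)(‖∇u₁‖² + ‖∇u₂‖²) + G(𝐮)`. -/
def Lfun {N : ℕ} (u : (Sp N → ℂ) × (Sp N → ℂ)) : ℝ :=
  -(1/2) * (gsq u.1 + gsq u.2) + Gfun u

/-- `M(𝐮) = (1/2)(m₁²‖u₁‖² + m₂²‖u₂‖²)`. -/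
def Mfun {N : ℕ} (m₁ m₂ : ℝ) (u : (Sp N → ℂ) × (Sp N → ℂ)) : ℝ :=
  (1/2) * (m₁ ^ 2 * nsq u.1 + m₂ ^ 2 * nsq u.2)

/-- `M_ω(𝐮) = ((m₁²-ω²)/2)‖u₁‖² + ((m₂²-4ω²)/2)‖u₂‖²`. -/
def Mom {N : ℕ} (m₁ m₂ ω : ℝ) (u : (Sp N → ℂ) × (Sp N → ℂ)) : ℝ :=
  (m₁ ^ 2 - ω ^ 2) / 2 * nsq u.1 + (m₂ ^ 2 - 4 * ω ^ 2) / 2 * nsq u.2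

/-- `J_ω(𝐮) = M_ω(𝐮) - L(𝐮)`. -/
def Jom {N : ℕ} (m₁ m₂ ω : ℝ) (u : (Sp N → ℂ) × (Sp N → ℂ)) : ℝ :=
  Mom m₁ m₂ ω u - Lfun u

/-- The Nehari functional `K_ω(𝐮)`. -/
def Kom {N : ℕ} (m₁ m₂ ω : ℝ) (u : (Sp N → ℂ) × (Sp N → ℂ)) : ℝ :=
  2 * Mom m₁ m₂ ω u + gsq u.1 + gsq u.2 - 3 * Gfun u

/-- `P_ω(𝐮) = α M_ω(𝐮) - (α+2) L(𝐮)` with `α = 4 - N`. -/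
def Pom {N : ℕ} (m₁ m₂ ω : ℝ) (u : (Sp N → ℂ) × (Sp N → ℂ)) : ℝ :=
  (4 - (N : ℝ)) * Mom m₁ m₂ ω u - ((4 - (N : ℝ)) + 2) * Lfun u

/-- `K(𝐯) = (1/2)(‖v₁‖² + ‖v₂‖²)`. -/
def Kfun {N : ℕ} (v : (Sp N → ℂ) × (Sp N → ℂ)) : ℝ :=
  (1/2) * (nsq v.1 + nsq v.2)

/-- The energy `E(𝐮,𝐯) = K(𝐯) + M(𝐮) - L(𝐮)`. -/
def Efun {N : ℕ} (m₁ m₂ : ℝ) (u v : (Sp N → ℂ) × (Sp N → ℂ)) : ℝ :=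
  Kfun v + Mfun m₁ m₂ u - Lfun u

/-- The charge `Q(𝐮,𝐯) = (v₁, i u₁)_{L²} + 2 (v₂, i u₂)_{L²}`. -/
def Qfun {N : ℕ} (u v : (Sp N → ℂ) × (Sp N → ℂ)) : ℝ :=
  (∫ x, v.1 x * starRingEnd ℂ (Complex.I * u.1 x)).re +
    2 * (∫ x, v.2 x * starRingEnd ℂ (Complex.I * u.2 x)).re

/-- `H(𝐮,𝐯) = -α K(𝐯) + α M(𝐮) - (α+2) L(𝐮)` with `α = 4 - N`. -/
def Hfun {N : ℕ} (m₁ m₂ : ℝ) (u v : (Sp N → ℂ) × (Sp N → ℂ)) : ℝ :=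
  -(4 - (N : ℝ)) * Kfun v + (4 - (N : ℝ)) * Mfun m₁ m₂ u - ((4 - (N : ℝ)) + 2) * Lfun u

/-- A ground-state pair: admissible, nonzero, `P_ω = 0`, and `J_ω` attains the
infimum of `J_ω` over nonzero admissible pairs on the Nehari manifold `K_ω = 0`. -/
def IsGroundState {N : ℕ} (m₁ m₂ ω : ℝ) (φ : (Sp N → ℂ) × (Sp N → ℂ)) : Prop :=
  Admissible φ ∧ φ ≠ 0 ∧ Pom m₁ m₂ ω φ = 0 ∧
  Jom m₁ m₂ ω φ =
    sInf {r : ℝ | ∃ w : (Sp N → ℂ) × (Sp N → ℂ),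
      Admissible w ∧ w ≠ 0 ∧ Kom m₁ m₂ ω w = 0 ∧ r = Jom m₁ m₂ ω w}

/-- `𝛙_ω = (iωφ₁, 2iωφ₂)`. -/
def psiOf {N : ℕ} (ω : ℝ) (φ : (Sp N → ℂ) × (Sp N → ℂ)) : (Sp N → ℂ) × (Sp N → ℂ) :=
  (fun x => Complex.I * (ω : ℂ) * φ.1 x, fun x => 2 * (Complex.I * (ω : ℂ)) * φ.2 x)

/-- The scaling `u^λ(x) = λ² u(λx)`, componentwise. -/
def uscale {N : ℕ} (lam : ℝ) (u : (Sp N → ℂ) × (Sp N → ℂ)) : (Sp N → ℂ) × (Sp N → ℂ) :=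
  (fun x => ((lam : ℂ)) ^ 2 * u.1 (lam • x), fun x => ((lam : ℂ)) ^ 2 * u.2 (lam • x))

/-- The scaling `v_λ(x) = λ^{N-2} v(λx)`, componentwise. -/
def vscale {N : ℕ} (lam : ℝ) (v : (Sp N → ℂ) × (Sp N → ℂ)) : (Sp N → ℂ) × (Sp N → ℂ) :=
  (fun x => ((lam ^ ((N : ℝ) - 2) : ℝ) : ℂ) * v.1 (lam • x),
   fun x => ((lam ^ ((N : ℝ) - 2) : ℝ) : ℂ) * v.2 (lam • x))



namespace Stmt8Aux

variable {N : ℕ}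

lemma nsq_nonneg (u : Sp N → ℂ) : 0 ≤ nsq u := integral_nonneg fun x => sq_nonneg _
lemma gsq_nonneg (u : Sp N → ℂ) : 0 ≤ gsq u := integral_nonneg fun x => sq_nonneg _

lemma integrable_sq_of (w : Sp N → ℂ) (hc : Continuous w) (h : MemLp w 2 volume) :
    Integrable (fun x => ‖w x‖^2) :=
  (memLp_two_iff_integrable_sq_norm hc.aestronglyMeasurable).mp h

lemma eq_zero_of_nsq_eq_zero (w : Sp N → ℂ) (hc : Continuous w)
    (h2 : MemLp w 2 volume) (h : nsq w = 0) : w = 0 := by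
  have hi := integrable_sq_of w hc h2
  have h0 : (fun x => ‖w x‖^2) =ᵐ[volume] 0 :=
    (integral_eq_zero_iff_of_nonneg (fun x => sq_nonneg _) hi).mp h
  have hw0 : w =ᵐ[volume] 0 := by
    filter_upwards [h0] with x hx
    have hx' : ‖w x‖^2 = 0 := hx
    have : ‖w x‖ = 0 := by nlinarith [norm_nonneg (w x)]
    simpa using this
  exact (Continuous.ae_eq_iff_eq volume hc continuous_const).mp hw0

lemma gsq_zero : gsq (0 : Sp N → ℂ) = 0 := by
  unfold gsq
  have h : ∀ x : Sp N, fderiv ℝ (0 : Sp N → ℂ) x = 0 := by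
    intro x
    have h0 : (0 : Sp N → ℂ) = fun _ => (0:ℂ) := rfl
    rw [h0, fderiv_const_apply]
  simp [h]

lemma Gfun_zero : Gfun (0 : (Sp N → ℂ) × (Sp N → ℂ)) = 0 := by
  unfold Gfun
  simp

lemma Gfun_zero_of (u : (Sp N → ℂ) × (Sp N → ℂ)) (h1 : u.1 = 0) (h2 : u.2 = 0) :
    Gfun u = 0 := by
  have : u = 0 := Prod.ext_iff.mpr ⟨h1, h2⟩
  rw [this, Gfun_zero]

/-! ### pointwise complex computations -/

lemma ptQ (ω : ℝ) (z : ℂ) :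
    (Complex.I*(ω:ℂ)*z) * (starRingEnd ℂ) (Complex.I*z) = ((ω * ‖z‖^2 : ℝ) : ℂ) := by
  simp only [map_mul, Complex.conj_I]
  have h : z * (starRingEnd ℂ) z = ((‖z‖^2 : ℝ) : ℂ) := by
    rw [Complex.mul_conj]
    simp [Complex.normSq_eq_norm_sq]
  rw [show Complex.I * ↑ω * z * (-Complex.I * (starRingEnd ℂ) z)
      = (Complex.I * -Complex.I) * ↑ω * (z * (starRingEnd ℂ) z) by ring, h,
    show (Complex.I * -Complex.I : ℂ) = 1 by simp [Complex.I_mul_I]]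
  push_cast
  ring

lemma ptQ2 (ω : ℝ) (z : ℂ) :
    (2*(Complex.I*(ω:ℂ))*z) * (starRingEnd ℂ) (Complex.I*z) = ((2*ω * ‖z‖^2 : ℝ) : ℂ) := by
  simp only [map_mul, Complex.conj_I]
  have h : z * (starRingEnd ℂ) z = ((‖z‖^2 : ℝ) : ℂ) := by
    rw [Complex.mul_conj]
    simp [Complex.normSq_eq_norm_sq]
  rw [show 2*(Complex.I * ↑ω) * z * (-Complex.I * (starRingEnd ℂ) z)
      = (Complex.I * -Complex.I) * (2*↑ω) * (z * (starRingEnd ℂ) z) by ring, h,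
    show (Complex.I * -Complex.I : ℂ) = 1 by simp [Complex.I_mul_I]]
  push_cast
  ring

lemma pt3 (ω : ℝ) (z : ℂ) : ‖Complex.I*(ω:ℂ)*z‖^2 = ω^2*‖z‖^2 := by
  simp [norm_mul, mul_pow, sq_abs]

lemma pt3b (ω : ℝ) (z : ℂ) : ‖2*(Complex.I*(ω:ℂ))*z‖^2 = 4*ω^2*‖z‖^2 := by
  rw [show 2*(Complex.I*(ω:ℂ))*z = ((2*ω:ℝ):ℂ)*(Complex.I*z) by push_cast; ring,
    norm_mul, norm_mul, Complex.norm_I, Complex.norm_real, mul_pow, mul_pow,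
    Real.norm_eq_abs, _root_.sq_abs]
  ring

lemma pt4 (c : ℝ) (zu zv : ℂ) :
    zv * (starRingEnd ℂ) (((c:ℂ)*Complex.I)*zu)
      = (c:ℂ) * (zv * (starRingEnd ℂ) (Complex.I*zu)) := by
  simp only [map_mul, Complex.conj_I, Complex.conj_ofReal]
  ring

lemma remul (r : ℝ) (z : ℂ) : ((r:ℂ)*z).re = r * z.re := by
  rw [← Complex.real_smul, Complex.smul_re, smul_eq_mul]

/-! ### square completion -/

lemma integrable_mul_conj (u v : Sp N → ℂ) (hu : MemLp u 2 volume)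
    (hv : MemLp v 2 volume) :
    Integrable (fun x => v x * (starRingEnd ℂ) (u x)) := by
  have hum : MemLp (fun x => (starRingEnd ℂ) (u x)) 2 volume := by
    refine ⟨Complex.continuous_conj.comp_aestronglyMeasurable hu.1, ?_⟩
    have h : eLpNorm (fun x => (starRingEnd ℂ) (u x)) 2 volume = eLpNorm u 2 volume := by
      apply eLpNorm_congr_norm_ae
      filter_upwards with x
      simp
    rw [h]; exact hu.2
  have h1 : MemLp ((fun x => (starRingEnd ℂ) (u x)) • v) 1 volume :=
    hv.smul hum
  have h2 := memLp_one_iff_integrable.mp h1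
  have h3 : (fun x => v x * (starRingEnd ℂ) (u x))
      = (fun x => (starRingEnd ℂ) (u x)) • v := by
    funext x; simp [mul_comm]
  rw [h3]; exact h2

lemma sq_completion (u v : Sp N → ℂ) (hu : MemLp u 2 volume) (hv : MemLp v 2 volume)
    (c : ℂ) :
    0 ≤ nsq v - 2 * (∫ x, v x * (starRingEnd ℂ) (c * u x)).re + ‖c‖^2 * nsq u := by
  have pt1 : ∀ z w : ℂ, ‖z - w‖^2 = ‖z‖^2 - 2*(z * (starRingEnd ℂ) w).re + ‖w‖^2 := by
    intro z w
    rw [Complex.sq_norm, Complex.sq_norm, Complex.sq_norm]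
    simp only [Complex.normSq_apply, Complex.mul_re, Complex.sub_re, Complex.sub_im,
      Complex.conj_re, Complex.conj_im]
    ring
  have husq : Integrable (fun x => ‖u x‖^2) :=
    (memLp_two_iff_integrable_sq_norm hu.1).mp hu
  have hvsq : Integrable (fun x => ‖v x‖^2) :=
    (memLp_two_iff_integrable_sq_norm hv.1).mp hv
  have hcu : MemLp (fun x => c * u x) 2 volume := hu.const_mul c
  have hprod : Integrable (fun x => v x * (starRingEnd ℂ) (c * u x)) :=
    integrable_mul_conj (fun x => c * u x) v hcu hv
  have key : ∫ x, ‖v x - c * u x‖^2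
      = nsq v - 2 * (∫ x, v x * (starRingEnd ℂ) (c * u x)).re + ‖c‖^2 * nsq u := by
    have hfun : (fun x => ‖v x - c * u x‖^2)
        = fun x => ‖v x‖^2 - 2*((v x * (starRingEnd ℂ) (c * u x)).re) + ‖c‖^2*‖u x‖^2 := by
      funext x
      rw [pt1 (v x) (c * u x)]
      simp [norm_mul, mul_pow]
    have hI2 : Integrable (fun x => 2 * ((v x * (starRingEnd ℂ) (c * u x)).re)) volume :=
      hprod.re.const_mul 2
    have hI1 : Integrable
        (fun x => ‖v x‖^2 - 2*((v x * (starRingEnd ℂ) (c * u x)).re)) volume :=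
      hvsq.sub hI2
    have hI3 : Integrable (fun x => ‖c‖^2 * ‖u x‖^2) volume := husq.const_mul _
    have hre : ∫ x, (v x * (starRingEnd ℂ) (c * u x)).re
        = (∫ x, v x * (starRingEnd ℂ) (c * u x)).re := by
      have h := integral_re hprod
      simpa [RCLike.re_to_complex] using h
    rw [hfun, integral_add hI1 hI3, integral_sub hvsq hI2, MeasureTheory.integral_const_mul,
      MeasureTheory.integral_const_mul, hre]
    rfl
  have h0 : 0 ≤ ∫ x, ‖v x - c * u x‖^2 := integral_nonneg fun x => sq_nonneg _
  linarith [key ▸ h0]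

/-! ### Q and K of the ground state pair -/

lemma Qfun_psi (ω : ℝ) (φ : (Sp N → ℂ) × (Sp N → ℂ)) :
    Qfun φ (psiOf ω φ) = ω * nsq φ.1 + 4 * ω * nsq φ.2 := by
  unfold Qfun psiOf
  dsimp only
  have h1 : (fun x => (Complex.I*(ω:ℂ)*φ.1 x) * (starRingEnd ℂ) (Complex.I * φ.1 x))
      = fun x => ((ω * ‖φ.1 x‖^2 : ℝ) : ℂ) := funext fun x => ptQ ω (φ.1 x)
  have h2 : (fun x => (2*(Complex.I*(ω:ℂ))*φ.2 x) * (starRingEnd ℂ) (Complex.I * φ.2 x))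
      = fun x => ((2*ω * ‖φ.2 x‖^2 : ℝ) : ℂ) := funext fun x => ptQ2 ω (φ.2 x)
  have hio1 : (∫ x, ((ω * ‖φ.1 x‖^2 : ℝ) : ℂ)) = (((∫ x, ω * ‖φ.1 x‖^2 : ℝ)) : ℂ) :=
    integral_ofReal
  have hio2 : (∫ x, ((2 * ω * ‖φ.2 x‖^2 : ℝ) : ℂ)) = (((∫ x, 2 * ω * ‖φ.2 x‖^2 : ℝ)) : ℂ) :=
    integral_ofReal
  rw [h1, h2, hio1, hio2, Complex.ofReal_re, Complex.ofReal_re,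
    MeasureTheory.integral_const_mul, MeasureTheory.integral_const_mul]
  unfold nsq
  ring

lemma Kfun_psi (ω : ℝ) (φ : (Sp N → ℂ) × (Sp N → ℂ)) :
    Kfun (psiOf ω φ) = (1/2) * (ω^2 * nsq φ.1 + 4*ω^2 * nsq φ.2) := by
  unfold Kfun psiOf
  dsimp only
  have h1 : nsq (fun x => Complex.I*(ω:ℂ)*φ.1 x) = ω^2 * nsq φ.1 := by
    unfold nsq
    rw [show (fun x => ‖Complex.I*(ω:ℂ)*φ.1 x‖^2) = fun x => ω^2 * ‖φ.1 x‖^2 from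
      funext fun x => pt3 ω (φ.1 x), MeasureTheory.integral_const_mul]
  have h2 : nsq (fun x => 2*(Complex.I*(ω:ℂ))*φ.2 x) = 4*ω^2 * nsq φ.2 := by
    unfold nsq
    rw [show (fun x => ‖2*(Complex.I*(ω:ℂ))*φ.2 x‖^2) = fun x => 4*ω^2 * ‖φ.2 x‖^2 from
      funext fun x => pt3b ω (φ.2 x), MeasureTheory.integral_const_mul]
  rw [h1, h2]

lemma E_eq_phi (m₁ m₂ ω : ℝ) (φ : (Sp N → ℂ) × (Sp N → ℂ)) :
    Efun m₁ m₂ φ (psiOf ω φ) = ω * Qfun φ (psiOf ω φ) + Jom m₁ m₂ ω φ := by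
  unfold Efun Jom
  rw [Kfun_psi, Qfun_psi]
  unfold Mfun Mom
  ring

lemma E_ge (m₁ m₂ ω : ℝ) (u v : (Sp N → ℂ) × (Sp N → ℂ)) (hu : Admissible u)
    (hv : SqInt v) :
    ω * Qfun u v + Jom m₁ m₂ ω u ≤ Efun m₁ m₂ u v := by
  obtain ⟨hd1, hd2, hm1, hm2, -, -, -⟩ := hu
  obtain ⟨hv1, hv2⟩ := hv
  have hA1 := sq_completion u.1 v.1 hm1 hv1 ((ω:ℂ) * Complex.I)
  have hA2 := sq_completion u.2 v.2 hm2 hv2 (((2*ω:ℝ):ℂ) * Complex.I)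
  have hmid1 : (∫ x, v.1 x * (starRingEnd ℂ) (((ω:ℂ)*Complex.I) * u.1 x))
      = (ω:ℂ) * ∫ x, v.1 x * (starRingEnd ℂ) (Complex.I * u.1 x) := by
    rw [← MeasureTheory.integral_const_mul]
    congr 1
    funext x
    exact pt4 ω (u.1 x) (v.1 x)
  have hmid2 : (∫ x, v.2 x * (starRingEnd ℂ) ((((2*ω:ℝ):ℂ))*Complex.I * u.2 x))
      = ((2*ω:ℝ):ℂ) * ∫ x, v.2 x * (starRingEnd ℂ) (Complex.I * u.2 x) := by
    rw [← MeasureTheory.integral_const_mul]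
    congr 1
    funext x
    exact pt4 (2*ω) (u.2 x) (v.2 x)
  have hn1 : ‖(ω:ℂ) * Complex.I‖^2 = ω^2 := by
    rw [norm_mul, Complex.norm_real, Complex.norm_I, mul_one, Real.norm_eq_abs, _root_.sq_abs]
  have hn2 : ‖((2*ω:ℝ):ℂ) * Complex.I‖^2 = 4*ω^2 := by
    rw [norm_mul, Complex.norm_real, Complex.norm_I, mul_one, Real.norm_eq_abs, _root_.sq_abs]
    ring
  rw [hmid1, remul, hn1] at hA1
  rw [hmid2, remul, hn2] at hA2
  unfold Efun Kfun Mfun Jom Mom Qfun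
  linarith [hA1, hA2]

/-! ### scaling -/

lemma fderiv_comp_smul (w : Sp N → ℂ) (hw : Differentiable ℝ w) (lam : ℝ) (x : Sp N) :
    fderiv ℝ (fun y : Sp N => w (lam • y)) x = lam • fderiv ℝ w (lam • x) := by
  have h1 : (fun y : Sp N => w (lam • y)) = w ∘ (lam • ContinuousLinearMap.id ℝ (Sp N)) := by
    funext y; simp
  rw [h1, fderiv_comp x (hw _) ((lam • ContinuousLinearMap.id ℝ (Sp N)).differentiableAt)]
  rw [ContinuousLinearMap.fderiv]
  ext y
  simp

lemma fderiv_scale (w : Sp N → ℂ) (hw : Differentiable ℝ w) (lam k : ℝ) (x : Sp N) :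
    fderiv ℝ (fun y : Sp N => ((k : ℂ)) * w (lam • y)) x
      = (k : ℂ) • (lam • fderiv ℝ w (lam • x)) := by
  have hd : DifferentiableAt ℝ (fun y : Sp N => w (lam • y)) x := by
    apply DifferentiableAt.comp
    · exact hw _
    · exact (differentiable_id.const_smul lam) x
  rw [fderiv_const_mul hd, fderiv_comp_smul w hw lam x]

lemma norm_fderiv_scale (w : Sp N → ℂ) (hw : Differentiable ℝ w) (lam k : ℝ)
    (hlam : 0 < lam) (x : Sp N) :
    ‖fderiv ℝ (fun y : Sp N => ((k : ℂ)) * w (lam • y)) x‖ ^ 2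
      = k^2 * lam^2 * ‖fderiv ℝ w (lam • x)‖ ^ 2 := by
  rw [fderiv_scale w hw lam k x]
  rw [norm_smul ((k:ℂ)) (lam • fderiv ℝ w (lam • x)), norm_smul lam (fderiv ℝ w (lam • x))]
  simp [mul_pow, sq_abs, abs_of_pos hlam]
  ring

lemma diff_scale (w : Sp N → ℂ) (hw : Differentiable ℝ w) (lam k : ℝ) :
    Differentiable ℝ (fun y : Sp N => ((k : ℂ)) * w (lam • y)) := by
  apply Differentiable.const_mul
  exact hw.comp (differentiable_id.const_smul lam)

lemma nsq_scale (w : Sp N → ℂ) (lam k : ℝ) (hlam : 0 < lam) :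
    nsq (fun x : Sp N => ((k:ℂ)) * w (lam • x)) = k^2 * (lam^N)⁻¹ * nsq w := by
  unfold nsq
  have h : (fun x : Sp N => ‖(k:ℂ) * w (lam • x)‖^2)
      = fun x : Sp N => k^2 * ((fun y => ‖w y‖^2) (lam • x)) := by
    funext x
    simp [norm_mul, mul_pow, sq_abs]
  rw [h, MeasureTheory.integral_const_mul,
    MeasureTheory.Measure.integral_comp_smul volume (fun y : Sp N => ‖w y‖ ^ 2) lam,
    finrank_euclideanSpace_fin, _root_.abs_of_nonneg (by positivity : (0:ℝ) ≤ ((lam^N)⁻¹ : ℝ))]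
  simp [smul_eq_mul]
  ring

lemma gsq_scale (w : Sp N → ℂ) (hw : Differentiable ℝ w) (lam k : ℝ) (hlam : 0 < lam) :
    gsq (fun x : Sp N => ((k:ℂ)) * w (lam • x)) = k^2 * lam^2 * (lam^N)⁻¹ * gsq w := by
  unfold gsq
  have h : (fun x : Sp N => ‖fderiv ℝ (fun y : Sp N => (k:ℂ) * w (lam • y)) x‖^2)
      = fun x : Sp N => k^2 * lam^2 * ((fun y => ‖fderiv ℝ w y‖^2) (lam • x)) := by
    funext x
    exact norm_fderiv_scale w hw lam k hlam x
  rw [h, MeasureTheory.integral_const_mul,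
    MeasureTheory.Measure.integral_comp_smul volume (fun y : Sp N => ‖fderiv ℝ w y‖ ^ 2) lam,
    finrank_euclideanSpace_fin, _root_.abs_of_nonneg (by positivity : (0:ℝ) ≤ ((lam^N)⁻¹ : ℝ))]
  simp [smul_eq_mul]
  ring

lemma G_scale (w₁ w₂ : Sp N → ℂ) (lam k : ℝ) (hlam : 0 < lam) :
    (∫ x : Sp N, ((k:ℂ) * w₁ (lam • x))^2 * (starRingEnd ℂ) ((k:ℂ) * w₂ (lam • x))).re
      = k^3 * (lam^N)⁻¹ * (∫ x : Sp N, (w₁ x)^2 * (starRingEnd ℂ) (w₂ x)).re := by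
  have h : (fun x : Sp N => ((k:ℂ) * w₁ (lam • x))^2 * (starRingEnd ℂ) ((k:ℂ) * w₂ (lam • x)))
      = fun x : Sp N => ((k^3:ℝ):ℂ) * ((fun y => (w₁ y)^2 * (starRingEnd ℂ) (w₂ y)) (lam • x)) := by
    funext x
    simp only [map_mul, Complex.conj_ofReal]
    push_cast
    ring
  rw [h, MeasureTheory.integral_const_mul,
    MeasureTheory.Measure.integral_comp_smul volume
      (fun y : Sp N => (w₁ y)^2 * (starRingEnd ℂ) (w₂ y)) lam,
    finrank_euclideanSpace_fin, _root_.abs_of_nonneg (by positivity : (0:ℝ) ≤ ((lam^N)⁻¹ : ℝ))]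
  rw [Complex.real_smul, ← mul_assoc, ← Complex.ofReal_mul, ← Complex.real_smul,
    Complex.smul_re, smul_eq_mul]

lemma scaled_exists (m₁ m₂ ω : ℝ) (u : (Sp N → ℂ) × (Sp N → ℂ)) (hu : Admissible u)
    (lam cc : ℝ) (hlam : 0 < lam) (hcc : 0 < cc) :
    ∃ W : (Sp N → ℂ) × (Sp N → ℂ), Admissible W ∧
      Mom m₁ m₂ ω W = cc^2 * lam^4 * (lam^N)⁻¹ * Mom m₁ m₂ ω u ∧
      gsq W.1 + gsq W.2 = cc^2 * lam^6 * (lam^N)⁻¹ * (gsq u.1 + gsq u.2) ∧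
      Gfun W = cc^3 * lam^6 * (lam^N)⁻¹ * Gfun u := by
  obtain ⟨hd1, hd2, hm1, hm2, hg1, hg2, hmix⟩ := hu
  set k : ℝ := cc * lam^2 with hk
  have hkpos : 0 < k := by positivity
  refine ⟨(fun x => ((k:ℝ):ℂ) * u.1 (lam • x), fun x => ((k:ℝ):ℂ) * u.2 (lam • x)),
    ⟨?_, ?_, ?_, ?_, ?_, ?_, ?_⟩, ?_, ?_, ?_⟩
  · exact diff_scale u.1 hd1 lam k
  · exact diff_scale u.2 hd2 lam k
  · dsimp only
    refine (memLp_two_iff_integrable_sq_norm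
      ((diff_scale u.1 hd1 lam k).continuous.aestronglyMeasurable)).mpr ?_
    have hfe : (fun x : Sp N => ‖(k:ℂ) * u.1 (lam • x)‖^2)
        = fun x : Sp N => k^2 * ((fun y => ‖u.1 y‖^2) (lam • x)) := by
      funext x; simp [norm_mul, mul_pow, sq_abs]
    rw [hfe]
    exact ((integrable_sq_of u.1 hd1.continuous hm1).comp_smul hlam.ne').const_mul _
  · dsimp only
    refine (memLp_two_iff_integrable_sq_norm
      ((diff_scale u.2 hd2 lam k).continuous.aestronglyMeasurable)).mpr ?_
    have hfe : (fun x : Sp N => ‖(k:ℂ) * u.2 (lam • x)‖^2)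
        = fun x : Sp N => k^2 * ((fun y => ‖u.2 y‖^2) (lam • x)) := by
      funext x; simp [norm_mul, mul_pow, sq_abs]
    rw [hfe]
    exact ((integrable_sq_of u.2 hd2.continuous hm2).comp_smul hlam.ne').const_mul _
  · dsimp only
    have hfe : (fun x : Sp N => ‖fderiv ℝ (fun y : Sp N => (k:ℂ) * u.1 (lam • y)) x‖^2)
        = fun x : Sp N => k^2 * lam^2 * ((fun y => ‖fderiv ℝ u.1 y‖^2) (lam • x)) := by
      funext x; exact norm_fderiv_scale u.1 hd1 lam k hlam x
    rw [hfe]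
    exact (hg1.comp_smul hlam.ne').const_mul _
  · dsimp only
    have hfe : (fun x : Sp N => ‖fderiv ℝ (fun y : Sp N => (k:ℂ) * u.2 (lam • y)) x‖^2)
        = fun x : Sp N => k^2 * lam^2 * ((fun y => ‖fderiv ℝ u.2 y‖^2) (lam • x)) := by
      funext x; exact norm_fderiv_scale u.2 hd2 lam k hlam x
    rw [hfe]
    exact (hg2.comp_smul hlam.ne').const_mul _
  · dsimp only
    have hfe : (fun x : Sp N => ‖(k:ℂ) * u.1 (lam • x)‖^2 * ‖(k:ℂ) * u.2 (lam • x)‖)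
        = fun x : Sp N => k^2 * k * ((fun y => ‖u.1 y‖^2 * ‖u.2 y‖) (lam • x)) := by
      funext x
      simp [norm_mul, mul_pow, sq_abs, abs_of_pos hkpos]
      ring
    rw [hfe]
    exact (hmix.comp_smul hlam.ne').const_mul _
  · unfold Mom
    dsimp only
    rw [nsq_scale u.1 lam k hlam, nsq_scale u.2 lam k hlam, hk]
    ring
  · dsimp only
    rw [gsq_scale u.1 hd1 lam k hlam, gsq_scale u.2 hd2 lam k hlam, hk]
    ring
  · unfold Gfun
    dsimp only
    rw [G_scale u.1 u.2 lam k hlam, hk]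
    ring


set_option maxHeartbeats 1000000 in
lemma choose_lam (NN : ℕ) (hNN : NN = 2 ∨ NN = 3) (A l a d g : ℝ) (hApos : 0 < A)
    (hP : (4 - (NN:ℝ)) * A = (6 - (NN:ℝ)) * l) (ha : 0 < a) (hd : 0 ≤ d)
    (hg : g = l + d/2) (hl : 0 < l) (hcon : a < A) :
    ∃ lam : ℝ, 0 < lam ∧ (2*a + lam^2*d)^3 < 54 * lam^NN * g^2 * (A - l) := by
  have hgpos : 0 < g := by rw [hg]; linarith
  rcases hNN with rfl | rfl
  · -- NN = 2
    have hl2 : l = A/2 := by push_cast at hP; linarith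
    have hAl : A - l = A/2 := by linarith
    have hAlpos : 0 < A - l := by linarith
    rcases hd.lt_or_eq with hdpos | hd0
    · refine ⟨Real.sqrt (a/d), Real.sqrt_pos.mpr (div_pos ha hdpos), ?_⟩
      have hs : (Real.sqrt (a/d))^2 = a/d := Real.sq_sqrt (div_pos ha hdpos).le
      rw [hs]
      have hda : a/d*d = a := div_mul_cancel₀ a hdpos.ne'
      rw [hda, hAl, show 54*(a/d)*g^2*(A/2) = 27*a*g^2*A/d by ring, lt_div_iff₀ hdpos]
      have hgv : g = A/2 + d/2 := by rw [hg, hl2]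
      rw [hgv]
      have hkey2 : a^2*d < A*((A+d)/2)^2 := by
        nlinarith [sq_nonneg (A - d), mul_pos ha hdpos, mul_pos (mul_pos ha ha) hdpos]
      have h27 : (0:ℝ) < 27*a := by linarith
      nlinarith [mul_lt_mul_of_pos_left hkey2 h27]
    · -- d = 0
      subst hd0
      have hP54 : 0 < 54*g^2*(A-l) := by nlinarith [pow_pos hgpos 2, mul_pos (pow_pos hgpos 2) hAlpos]
      have h8a : 0 < 8*a^3 := by nlinarith [pow_pos ha 3]
      have hXpos : 0 < 8*a^3/(54*g^2*(A-l)) := div_pos h8a hP54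
      refine ⟨Real.sqrt (8*a^3/(54*g^2*(A-l))) + 1, by positivity, ?_⟩
      have hXval : (8*a^3/(54*g^2*(A-l))) * (54*g^2*(A-l)) = 8*a^3 :=
        div_mul_cancel₀ _ hP54.ne'
      have hsP : (Real.sqrt (8*a^3/(54*g^2*(A-l))))^2 * (54*g^2*(A-l)) = 8*a^3 := by
        rw [Real.sq_sqrt hXpos.le]; exact hXval
      nlinarith [hsP, hP54,
        mul_nonneg (Real.sqrt_nonneg (8*a^3/(54*g^2*(A-l)))) hP54.le]
  · -- NN = 3
    have hl3 : l = A/3 := by push_cast at hP; linarith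
    have hAl : A - l = 2*A/3 := by linarith
    have hAlpos : 0 < A - l := by linarith
    rcases hd.lt_or_eq with hdpos | hd0
    · have h2ad : 0 < 2*a/d := div_pos (by linarith) hdpos
      refine ⟨Real.sqrt (2*a/d), Real.sqrt_pos.mpr h2ad, ?_⟩
      set lam := Real.sqrt (2*a/d) with hlamdef
      have hlam : 0 < lam := Real.sqrt_pos.mpr h2ad
      have hs : lam^2 = 2*a/d := Real.sq_sqrt h2ad.le
      have hsd : lam^2*d = 2*a := by rw [hs]; field_simp
      have hgv : g = A/3 + d/2 := by rw [hg, hl3]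
      have h81 : 32*A*d^3 ≤ 81*g^4 := by
        rw [hgv]
        nlinarith [sq_nonneg (2*A - d), sq_nonneg (2*A + d), sq_nonneg d, sq_nonneg A,
          mul_nonneg hApos.le hd, mul_nonneg (mul_nonneg hApos.le hd) hd,
          mul_nonneg (mul_nonneg hApos.le hApos.le) hd,
          mul_nonneg (sq_nonneg (2*A-d)) hd, mul_nonneg (sq_nonneg (2*A-d)) hApos.le]
      have hcube : a^3 < A^3 := by nlinarith [sq_nonneg (A+a), mul_pos ha ha, mul_pos hApos hApos]
      have h1 : 64*a^2*d < 72*lam*g^2*A := by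
        have hR : (0:ℝ) ≤ 72*lam*g^2*A := by
          nlinarith [mul_pos (mul_pos hlam (pow_pos hgpos 2)) hApos]
        have hsq : (64*a^2*d)^2 < (72*lam*g^2*A)^2 := by
          have e1 : (72*lam*g^2*A)^2 = 5184*(lam^2)*g^4*A^2 := by ring
          rw [e1, hs, show 5184*(2*a/d)*g^4*A^2 = 10368*a*g^4*A^2/d by ring,
            lt_div_iff₀ hdpos]
          have hint1 : 128*a*A^2*(32*A*d^3) ≤ 128*a*A^2*(81*g^4) :=
            mul_le_mul_of_nonneg_left h81
              (by nlinarith [mul_pos (mul_pos ha hApos) hApos] : (0:ℝ) ≤ 128*a*A^2)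
          have hint2 : a^3*(4096*a*d^3) < A^3*(4096*a*d^3) :=
            mul_lt_mul_of_pos_right hcube
              (by nlinarith [mul_pos ha (pow_pos hdpos 3)] : (0:ℝ) < 4096*a*d^3)
          nlinarith [hint1, hint2]
        exact lt_of_pow_lt_pow_left₀ 2 hR hsq
      have hfin : 64*a^3*d < 72*a*lam*g^2*A := by
        nlinarith [mul_lt_mul_of_pos_left h1 ha]
      have hmul : (2*a + lam^2*d)^3 * d < 54*lam^3*g^2*(A-l) * d := by
        calc (2*a + lam^2*d)^3 * d = 64*a^3*d := by rw [hsd]; ring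
          _ < 72*a*lam*g^2*A := hfin
          _ = 54*lam^3*g^2*(A-l) * d := by
              rw [hAl, show 54*lam^3*g^2*(2*A/3)*d = 36*lam*g^2*A*(lam^2*d) by ring, hsd]
              ring
      exact lt_of_mul_lt_mul_right hmul hdpos.le
    · -- d = 0
      subst hd0
      have hP54 : 0 < 54*g^2*(A-l) := by nlinarith [pow_pos hgpos 2, mul_pos (pow_pos hgpos 2) hAlpos]
      have h8a : 0 < 8*a^3 := by nlinarith [pow_pos ha 3]
      have hXpos : 0 < 8*a^3/(54*g^2*(A-l)) := div_pos h8a hP54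
      have hXval : (8*a^3/(54*g^2*(A-l))) * (54*g^2*(A-l)) = 8*a^3 :=
        div_mul_cancel₀ _ hP54.ne'
      refine ⟨8*a^3/(54*g^2*(A-l)) + 1, by linarith, ?_⟩
      have h1 : 1 ≤ 8*a^3/(54*g^2*(A-l)) + 1 := by linarith
      have h3 : 8*a^3/(54*g^2*(A-l)) + 1 ≤ (8*a^3/(54*g^2*(A-l)) + 1)^3 :=
        le_self_pow₀ h1 (by norm_num)
      nlinarith [hXval, h3, hP54, hXpos,
        mul_le_mul_of_nonneg_right h3 hP54.le,
        mul_lt_mul_of_pos_right (show 8*a^3/(54*g^2*(A-l)) < 8*a^3/(54*g^2*(A-l)) + 1 by linarith) hP54]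

set_option maxHeartbeats 1000000 in
lemma key_ineq {N : ℕ} (hN : N = 2 ∨ N = 3) (m₁ m₂ ω : ℝ)
    (hc1 : 0 < (m₁^2 - ω^2)/2) (hc2 : 0 < (m₂^2 - 4*ω^2)/2)
    (φ : (Sp N → ℂ) × (Sp N → ℂ)) (hφ : IsGroundState m₁ m₂ ω φ)
    (u : (Sp N → ℂ) × (Sp N → ℂ)) (hu : Admissible u) (hL : Lfun u = Lfun φ) :
    Jom m₁ m₂ ω φ ≤ Jom m₁ m₂ ω u := by
  obtain ⟨hφadm, hφne, hφP, hφinf⟩ := hφ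
  have h4N : (0:ℝ) < 4 - (N:ℝ) := by rcases hN with rfl | rfl <;> norm_num
  have h6N : (0:ℝ) < 6 - (N:ℝ) := by rcases hN with rfl | rfl <;> norm_num
  have hPφ : (4 - (N:ℝ)) * Mom m₁ m₂ ω φ = (6 - (N:ℝ)) * Lfun φ := by
    have h := hφP
    unfold Pom at h
    linarith
  have hn1 := nsq_nonneg φ.1
  have hn2 := nsq_nonneg φ.2
  have hApos : 0 < Mom m₁ m₂ ω φ := by
    have hAnn : 0 ≤ Mom m₁ m₂ ω φ := by unfold Mom; nlinarith
    rcases hAnn.lt_or_eq with h | h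
    · exact h
    · exfalso
      have h1 : nsq φ.1 = 0 := by
        apply le_antisymm _ hn1
        unfold Mom at h
        nlinarith
      have h2 : nsq φ.2 = 0 := by
        apply le_antisymm _ hn2
        unfold Mom at h
        nlinarith
      have hz1 := eq_zero_of_nsq_eq_zero φ.1 hφadm.1.continuous hφadm.2.2.1 h1
      have hz2 := eq_zero_of_nsq_eq_zero φ.2 hφadm.2.1.continuous hφadm.2.2.2.1 h2
      exact hφne (Prod.ext_iff.mpr ⟨hz1, hz2⟩)
  have hlpos : 0 < Lfun φ := by
    by_contra h
    push_neg at h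
    nlinarith [mul_pos h4N hApos, mul_nonpos_of_nonneg_of_nonpos h6N.le h]
  have hAlpos : 0 < Mom m₁ m₂ ω φ - Lfun φ := by
    by_contra hh
    push_neg at hh
    nlinarith [mul_nonpos_of_nonneg_of_nonpos h6N.le
      (by linarith : Mom m₁ m₂ ω φ - Lfun φ ≤ 0), hApos, hPφ]
  have hdnn : 0 ≤ gsq u.1 + gsq u.2 := add_nonneg (gsq_nonneg _) (gsq_nonneg _)
  have hgd : Gfun u = Lfun φ + (gsq u.1 + gsq u.2)/2 := by
    have h : -(1/2)*(gsq u.1 + gsq u.2) + Gfun u = Lfun φ := by rw [← hL]; rfl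
    linarith
  have hgpos : 0 < Gfun u := by linarith
  have hapos : 0 < Mom m₁ m₂ ω u := by
    have haNN : 0 ≤ Mom m₁ m₂ ω u := by
      unfold Mom
      nlinarith [nsq_nonneg u.1, nsq_nonneg u.2]
    rcases haNN.lt_or_eq with h | h
    · exact h
    · exfalso
      have h1 : nsq u.1 = 0 := by
        apply le_antisymm _ (nsq_nonneg u.1)
        unfold Mom at h
        nlinarith [nsq_nonneg u.1, nsq_nonneg u.2]
      have h2 : nsq u.2 = 0 := by
        apply le_antisymm _ (nsq_nonneg u.2)
        unfold Mom at h
        nlinarith [nsq_nonneg u.1, nsq_nonneg u.2]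
      have hz1 := eq_zero_of_nsq_eq_zero u.1 hu.1.continuous hu.2.2.1 h1
      have hz2 := eq_zero_of_nsq_eq_zero u.2 hu.2.1.continuous hu.2.2.2.1 h2
      rw [Gfun_zero_of u hz1 hz2] at hgpos
      exact lt_irrefl 0 hgpos
  have hJφval : Jom m₁ m₂ ω φ = Mom m₁ m₂ ω φ - Lfun φ := rfl
  have hMle : Mom m₁ m₂ ω φ ≤ Mom m₁ m₂ ω u := by
    by_contra hcon
    push_neg at hcon
    obtain ⟨lam, hlam, hkey⟩ := choose_lam N hN (Mom m₁ m₂ ω φ) (Lfun φ) (Mom m₁ m₂ ω u)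
      (gsq u.1 + gsq u.2) (Gfun u) hApos hPφ hapos hdnn hgd hlpos hcon
    have hpN : (0:ℝ) < lam^N := pow_pos hlam N
    have hlamne : lam ≠ 0 := hlam.ne'
    have hgne : Gfun u ≠ 0 := hgpos.ne'
    have hpNne : lam^N ≠ 0 := hpN.ne'
    have hnum : 0 < 2*Mom m₁ m₂ ω u + lam^2*(gsq u.1 + gsq u.2) := by
      nlinarith [mul_nonneg (sq_nonneg lam) hdnn]
    have hden : 0 < 3*lam^2*(Gfun u) := by
      nlinarith [mul_pos (pow_pos hlam 2) hgpos]
    have hccpos : 0 < (2*Mom m₁ m₂ ω u + lam^2*(gsq u.1 + gsq u.2))/(3*lam^2*(Gfun u)) :=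
      div_pos hnum hden
    obtain ⟨W, hWadm, hMomW, hgsqW, hGW⟩ := scaled_exists m₁ m₂ ω u hu lam
      ((2*Mom m₁ m₂ ω u + lam^2*(gsq u.1 + gsq u.2))/(3*lam^2*(Gfun u))) hlam hccpos
    have hGWpos : 0 < Gfun W := by
      rw [hGW]
      exact mul_pos (mul_pos (mul_pos (pow_pos hccpos 3) (pow_pos hlam 6))
        (inv_pos.mpr hpN)) hgpos
    have hWne : W ≠ 0 := by
      intro h0
      rw [h0, Gfun_zero] at hGWpos
      exact lt_irrefl 0 hGWpos
    have hK0 : Kom m₁ m₂ ω W = 0 := by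
      have hsh : Kom m₁ m₂ ω W = 2*Mom m₁ m₂ ω W + (gsq W.1 + gsq W.2) - 3*Gfun W := by
        unfold Kom; ring
      rw [hsh, hMomW, hgsqW, hGW]
      field_simp
      ring
    have hJW : Jom m₁ m₂ ω W
        = (2*Mom m₁ m₂ ω u + lam^2*(gsq u.1 + gsq u.2))^3 / (54 * lam^N * (Gfun u)^2) := by
      have hsh : Jom m₁ m₂ ω W = Mom m₁ m₂ ω W + (1/2)*(gsq W.1 + gsq W.2) - Gfun W := by
        unfold Jom Lfun; ring
      rw [hsh, hMomW, hgsqW, hGW]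
      field_simp
      ring
    have h54 : (0:ℝ) < 54 * lam^N * (Gfun u)^2 := by
      nlinarith [mul_pos hpN (pow_pos hgpos 2)]
    have hJWlt : Jom m₁ m₂ ω W < Jom m₁ m₂ ω φ := by
      rw [hJW, hJφval, div_lt_iff₀ h54]
      linarith [hkey]
    have hmem : Jom m₁ m₂ ω W ∈ {r : ℝ | ∃ w : (Sp N → ℂ) × (Sp N → ℂ),
        Admissible w ∧ w ≠ 0 ∧ Kom m₁ m₂ ω w = 0 ∧ r = Jom m₁ m₂ ω w} :=
      ⟨W, hWadm, hWne, hK0, rfl⟩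
    by_cases hb : BddBelow {r : ℝ | ∃ w : (Sp N → ℂ) × (Sp N → ℂ),
        Admissible w ∧ w ≠ 0 ∧ Kom m₁ m₂ ω w = 0 ∧ r = Jom m₁ m₂ ω w}
    · have hle := csInf_le hb hmem
      rw [← hφinf] at hle
      linarith
    · rw [Real.sInf_of_not_bddBelow hb] at hφinf
      have hJφpos : 0 < Jom m₁ m₂ ω φ := by rw [hJφval]; exact hAlpos
      linarith [hJφpos, hφinf.le, hφinf.ge]
  have hJu : Jom m₁ m₂ ω u = Mom m₁ m₂ ω u - Lfun u := rfl
  rw [hJφval, hJu, hL]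
  linarith


end Stmt8Aux

/-- If `Q(𝐮,𝐯) = Q(𝛗_ω,𝛙_ω)` and `L(𝐮) = L(𝛗_ω)`, then
`E(𝛗_ω,𝛙_ω) ≤ E(𝐮,𝐯)`. -/
theorem stmt_8 {N : ℕ} (hN : N = 2 ∨ N = 3) (m₁ m₂ ω : ℝ)
    (hm₁ : 0 < m₁) (hm₂ : 0 < m₂) (hω : ω ^ 2 < min (m₁ ^ 2) (m₂ ^ 2 / 4))
    (φ : (Sp N → ℂ) × (Sp N → ℂ)) (hφ : IsGroundState m₁ m₂ ω φ)
    (u v : (Sp N → ℂ) × (Sp N → ℂ)) (hu : Admissible u) (hv : SqInt v)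
    (hQ : Qfun u v = Qfun φ (psiOf ω φ))
    (hL : Lfun u = Lfun φ) :
    Efun m₁ m₂ φ (psiOf ω φ) ≤ Efun m₁ m₂ u v := by
  have hω1 : ω^2 < m₁^2 := lt_of_lt_of_le hω (min_le_left _ _)
  have hω2 : ω^2 < m₂^2/4 := lt_of_lt_of_le hω (min_le_right _ _)
  have hc1 : 0 < (m₁^2 - ω^2)/2 := by linarith
  have hc2 : 0 < (m₂^2 - 4*ω^2)/2 := by linarith
  have h1 := Stmt8Aux.E_eq_phi m₁ m₂ ω φ
  have h2 := Stmt8Aux.E_ge m₁ m₂ ω u v hu hv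
  have h3 := Stmt8Aux.key_ineq hN m₁ m₂ ω hc1 hc2 φ hφ u hu hL
  rw [hQ] at h2
  linarith [h1, h2, h3]

end
end

section
/- Let N ∈ {2,3}, α = 4 − N, m₁, m₂ > 0, and ω ∈ ℝ with ω² < min{m₁², m₂²/4}. If 𝐮 is an admissible pair, not identically zero, with P_ω(𝐮) = 0, then the function λ ↦ J_ω(𝐮^λ) = λ^α·M_ω(𝐮) − λ^{α+2}·L(𝐮) is monotone increasing on (0,1] and monotone decreasing on [1,∞); in particular J_ω(𝐮^λ) ≤ J_ω(𝐮) for all λ > 0. -/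
open MeasureTheory Complex

noncomputable section

lemma comp_smul_int {N : ℕ} {E : Type*} [NormedAddCommGroup E] [NormedSpace ℝ E]
    (f : Sp N → E) {lam : ℝ} (h : 0 < lam) :
    ∫ x, f (lam • x) = ((lam ^ N)⁻¹ : ℝ) • ∫ x, f x := by
  rw [MeasureTheory.Measure.integral_comp_smul volume f lam, finrank_euclideanSpace_fin,
    _root_.abs_of_nonneg (inv_nonneg.2 (pow_nonneg h.le _))]

lemma fderiv_scale {N : ℕ} (u : Sp N → ℂ) (hu : Differentiable ℝ u) (lam : ℝ) (c : ℂ)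
    (x : Sp N) :
    fderiv ℝ (fun x => c * u (lam • x)) x = c • (lam • fderiv ℝ u (lam • x)) := by
  have h1 : HasFDerivAt (fun x : Sp N => lam • x) (lam • ContinuousLinearMap.id ℝ (Sp N)) x := by
    exact (hasFDerivAt_id x).const_smul lam
  have h2 : HasFDerivAt (fun x => u (lam • x))
      ((fderiv ℝ u (lam • x)).comp (lam • ContinuousLinearMap.id ℝ (Sp N))) x :=
    (hu (lam • x)).hasFDerivAt.comp x h1
  have h3 : (fderiv ℝ u (lam • x)).comp (lam • ContinuousLinearMap.id ℝ (Sp N))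
      = lam • fderiv ℝ u (lam • x) := by ext y; simp
  rw [h3] at h2
  exact (h2.const_mul c).fderiv

lemma nsq_scale {N : ℕ} (u : Sp N → ℂ) {lam : ℝ} (h : 0 < lam) :
    nsq (fun x => ((lam : ℂ)) ^ 2 * u (lam • x)) = lam ^ 4 * (lam ^ N)⁻¹ * nsq u := by
  unfold nsq
  have : ∀ x : Sp N, ‖((lam : ℂ)) ^ 2 * u (lam • x)‖ ^ 2 = lam ^ 4 * ‖u (lam • x)‖ ^ 2 := by
    intro x
    rw [norm_mul, norm_pow, Complex.norm_real, Real.norm_eq_abs, abs_of_pos h]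
    ring
  simp_rw [this]
  rw [integral_const_mul, comp_smul_int (fun y => ‖u y‖ ^ 2) h, smul_eq_mul]
  ring

lemma gsq_scale {N : ℕ} (u : Sp N → ℂ) (hu : Differentiable ℝ u) {lam : ℝ} (h : 0 < lam) :
    gsq (fun x => ((lam : ℂ)) ^ 2 * u (lam • x)) = lam ^ 6 * (lam ^ N)⁻¹ * gsq u := by
  unfold gsq
  have : ∀ x : Sp N, ‖fderiv ℝ (fun x => ((lam : ℂ)) ^ 2 * u (lam • x)) x‖ ^ 2
      = lam ^ 6 * ‖fderiv ℝ u (lam • x)‖ ^ 2 := by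
    intro x
    rw [fderiv_scale u hu lam _ x,
      norm_smul ((lam:ℂ)^2) (lam • fderiv ℝ u (lam • x)),
      norm_smul lam (fderiv ℝ u (lam • x))]
    simp [abs_of_pos h]
    ring
  simp_rw [this]
  rw [integral_const_mul, comp_smul_int (fun y => ‖fderiv ℝ u y‖ ^ 2) h, smul_eq_mul]
  ring

lemma Gre_scale {N : ℕ} (u1 u2 : Sp N → ℂ) {lam : ℝ} (h : 0 < lam) :
    (∫ x, ((lam : ℂ) ^ 2 * u1 (lam • x)) ^ 2 * starRingEnd ℂ ((lam : ℂ) ^ 2 * u2 (lam • x))).re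
      = lam ^ 6 * (lam ^ N)⁻¹ * (∫ x, (u1 x) ^ 2 * starRingEnd ℂ (u2 x)).re := by
  have hpt : ∀ x : Sp N, ((lam : ℂ) ^ 2 * u1 (lam • x)) ^ 2
      * starRingEnd ℂ ((lam : ℂ) ^ 2 * u2 (lam • x))
      = (lam : ℂ) ^ 6 * ((u1 (lam • x)) ^ 2 * starRingEnd ℂ (u2 (lam • x))) := by
    intro x
    rw [map_mul, show (starRingEnd ℂ) ((lam : ℂ) ^ 2) = (lam : ℂ) ^ 2 by
      simp [map_pow, Complex.conj_ofReal]]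
    ring
  simp_rw [hpt]
  rw [integral_const_mul, comp_smul_int (fun y => (u1 y) ^ 2 * starRingEnd ℂ (u2 y)) h,
    Complex.real_smul, ← mul_assoc, ← Complex.ofReal_pow, ← Complex.ofReal_mul,
    Complex.re_ofReal_mul]

lemma key_alg (M L : ℝ) (hM : 0 ≤ M) (α : ℕ) (hα : α = 1 ∨ α = 2)
    (hP : (α : ℝ) * M - ((α : ℝ) + 2) * L = 0) :
    (∀ a b : ℝ, 0 < a → a ≤ b → b ≤ 1 →
        a ^ α * M - a ^ (α + 2) * L ≤ b ^ α * M - b ^ (α + 2) * L) ∧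
    (∀ a b : ℝ, 1 ≤ a → a ≤ b →
        b ^ α * M - b ^ (α + 2) * L ≤ a ^ α * M - a ^ (α + 2) * L) ∧
    (∀ l : ℝ, 0 < l → l ^ α * M - l ^ (α + 2) * L ≤ M - L) := by
  rcases hα with rfl | rfl
  · have hL : L = M / 3 := by push_cast at hP; linarith
    subst hL
    norm_num
    refine ⟨?_, ?_, ?_⟩
    · intro a b ha hab hb1
      nlinarith [mul_nonneg (mul_nonneg hM (by nlinarith : (0:ℝ) ≤ b - a))
        (by nlinarith : (0:ℝ) ≤ 3 - a^2 - a*b - b^2), ha.le]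
    · intro a b ha hab
      nlinarith [mul_nonneg (mul_nonneg hM (by nlinarith : (0:ℝ) ≤ b - a))
        (by nlinarith : (0:ℝ) ≤ a^2 + a*b + b^2 - 3)]
    · intro l hl
      nlinarith [mul_nonneg (mul_nonneg hM (sq_nonneg (l - 1))) (by linarith : (0:ℝ) ≤ l + 2)]
  · have hL : L = M / 2 := by push_cast at hP; linarith
    subst hL
    norm_num
    refine ⟨?_, ?_, ?_⟩
    · intro a b ha hab hb1
      nlinarith [mul_nonneg (mul_nonneg hM (by nlinarith : (0:ℝ) ≤ b^2 - a^2))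
        (by nlinarith : (0:ℝ) ≤ 2 - a^2 - b^2)]
    · intro a b ha hab
      nlinarith [mul_nonneg (mul_nonneg hM (by nlinarith : (0:ℝ) ≤ b^2 - a^2))
        (by nlinarith : (0:ℝ) ≤ a^2 + b^2 - 2)]
    · intro l hl
      nlinarith [mul_nonneg hM (sq_nonneg (1 - l^2))]

/-- If `P_ω(𝐮) = 0` and `𝐮 ≠ 0`, then the function
`λ ↦ J_ω(𝐮^λ) = λ^α M_ω(𝐮) - λ^{α+2} L(𝐮)` is monotone increasing on `(0,1]`
and monotone decreasing on `[1,∞)`; in particular `J_ω(𝐮^λ) ≤ J_ω(𝐮)` for all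
`λ > 0`. -/
theorem stmt_9 {N : ℕ} (hN : N = 2 ∨ N = 3) (m₁ m₂ ω : ℝ)
    (hm₁ : 0 < m₁) (hm₂ : 0 < m₂) (hω : ω ^ 2 < min (m₁ ^ 2) (m₂ ^ 2 / 4))
    (u : (Sp N → ℂ) × (Sp N → ℂ)) (hu : Admissible u) (hne : u ≠ 0)
    (hP : Pom m₁ m₂ ω u = 0) :
    (∀ lam : ℝ, 0 < lam →
      Jom m₁ m₂ ω (uscale lam u)
        = lam ^ (4 - (N : ℝ)) * Mom m₁ m₂ ω u - lam ^ ((4 - (N : ℝ)) + 2) * Lfun u) ∧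
    MonotoneOn (fun lam : ℝ => Jom m₁ m₂ ω (uscale lam u)) (Set.Ioc 0 1) ∧
    AntitoneOn (fun lam : ℝ => Jom m₁ m₂ ω (uscale lam u)) (Set.Ici 1) ∧
    (∀ lam : ℝ, 0 < lam → Jom m₁ m₂ ω (uscale lam u) ≤ Jom m₁ m₂ ω u) := by
  have hd1 := hu.1
  have hd2 := hu.2.1
  have hω1 : ω ^ 2 < m₁ ^ 2 := lt_of_lt_of_le hω (min_le_left _ _)
  have hω2 : ω ^ 2 < m₂ ^ 2 / 4 := lt_of_lt_of_le hω (min_le_right _ _)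
  have hM : 0 ≤ Mom m₁ m₂ ω u := by
    have h1 : 0 ≤ nsq u.1 := integral_nonneg fun x => by positivity
    have h2 : 0 ≤ nsq u.2 := integral_nonneg fun x => by positivity
    unfold Mom
    nlinarith
  have hform : ∀ lam : ℝ, 0 < lam → Jom m₁ m₂ ω (uscale lam u)
      = lam ^ (4 - (N : ℝ)) * Mom m₁ m₂ ω u - lam ^ ((4 - (N : ℝ)) + 2) * Lfun u := by
    intro lam hl
    have e4 : lam ^ (4 - (N : ℝ)) = lam ^ 4 * (lam ^ N)⁻¹ := by
      rw [show (4 - (N : ℝ)) = ((4 : ℕ) : ℝ) - ((N : ℕ) : ℝ) by norm_num,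
        Real.rpow_sub hl, Real.rpow_natCast, Real.rpow_natCast, div_eq_mul_inv]
    have e6 : lam ^ ((4 - (N : ℝ)) + 2) = lam ^ 6 * (lam ^ N)⁻¹ := by
      rw [show (4 - (N : ℝ)) + 2 = ((6 : ℕ) : ℝ) - ((N : ℕ) : ℝ) by push_cast; ring,
        Real.rpow_sub hl, Real.rpow_natCast, Real.rpow_natCast, div_eq_mul_inv]
    rw [e4, e6]
    unfold Jom Mom Lfun Gfun uscale
    simp only
    rw [nsq_scale u.1 hl, nsq_scale u.2 hl, gsq_scale u.1 hd1 hl, gsq_scale u.2 hd2 hl,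
      Gre_scale u.1 u.2 hl]
    ring
  obtain ⟨αn, hαn, hcast⟩ : ∃ αn : ℕ, (αn = 1 ∨ αn = 2) ∧ (4 - (N : ℝ)) = (αn : ℝ) := by
    rcases hN with rfl | rfl
    · exact ⟨2, Or.inr rfl, by norm_num⟩
    · exact ⟨1, Or.inl rfl, by norm_num⟩
  have hP' : (αn : ℝ) * Mom m₁ m₂ ω u - ((αn : ℝ) + 2) * Lfun u = 0 := by
    unfold Pom at hP
    rw [hcast] at hP
    exact hP
  obtain ⟨k1, k2, k3⟩ := key_alg (Mom m₁ m₂ ω u) (Lfun u) hM αn hαn hP'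
  have hform' : ∀ lam : ℝ, 0 < lam → Jom m₁ m₂ ω (uscale lam u)
      = lam ^ αn * Mom m₁ m₂ ω u - lam ^ (αn + 2) * Lfun u := by
    intro lam hl
    rw [hform lam hl, hcast, show ((αn : ℝ) + 2) = ((αn + 2 : ℕ) : ℝ) by push_cast; ring,
      Real.rpow_natCast, Real.rpow_natCast]
  refine ⟨hform, ?_, ?_, ?_⟩
  · intro a ha b hb hab
    simp only
    rw [hform' a ha.1, hform' b hb.1]
    exact k1 a b ha.1 hab hb.2
  · intro a ha b hb hab
    simp only
    rw [hform' a (lt_of_lt_of_le one_pos ha), hform' b (lt_of_lt_of_le one_pos hb)]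
    exact k2 a b ha hab
  · intro lam hl
    rw [hform' lam hl]
    exact k3 lam hl

end
end

section
/- Let N ∈ {2,3}, m₁, m₂ > 0, and ω ∈ ℝ. For every admissible pair 𝐮 = (u₁,u₂) and every pair 𝐯 = (v₁,v₂) of square-integrable functions, E(𝐮,𝐯) − ω·Q(𝐮,𝐯) = J_ω(𝐮) + (1/2)‖v₁ − iω u₁‖_{L²}² + (1/2)‖v₂ − 2iω u₂‖_{L²}². -/
open MeasureTheory Complex

noncomputable section

lemma mul_conj_integrable {N : ℕ} (f g : Sp N → ℂ) (hf : MemLp f 2 volume)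
    (hg : MemLp g 2 volume) : Integrable (fun x => f x * starRingEnd ℂ (g x)) := by
  have hb : Integrable (fun x => (1/2) * (‖f x‖^2 + ‖g x‖^2)) :=
    ((hf.norm.integrable_sq).add (hg.norm.integrable_sq)).const_mul _
  refine hb.mono' (hf.aestronglyMeasurable.mul
    (Complex.continuous_conj.comp_aestronglyMeasurable hg.aestronglyMeasurable)) ?_
  filter_upwards with x
  rw [norm_mul, RCLike.norm_conj]
  nlinarith [norm_nonneg (f x), norm_nonneg (g x), sq_nonneg (‖f x‖ - ‖g x‖)]

lemma nsq_sub {N : ℕ} (f g : Sp N → ℂ) (hf : MemLp f 2 volume) (hg : MemLp g 2 volume) :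
    nsq (fun x => f x - g x)
      = nsq f - 2 * (∫ x, f x * starRingEnd ℂ (g x)).re + nsq g := by
  have hpt : ∀ x, ‖f x - g x‖^2
      = ‖f x‖^2 - 2 * (f x * starRingEnd ℂ (g x)).re + ‖g x‖^2 := by
    intro x
    simp only [Complex.sq_norm, Complex.normSq_apply,
      Complex.sub_re, Complex.sub_im, Complex.mul_re, Complex.conj_re, Complex.conj_im]
    ring
  have hmul := mul_conj_integrable f g hf hg
  rw [nsq]
  simp_rw [hpt]
  have hre : Integrable (fun x => (f x * starRingEnd ℂ (g x)).re) := hmul.re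
  have hA : Integrable (fun x => ‖f x‖ ^ 2 - 2 * (f x * starRingEnd ℂ (g x)).re) volume :=
    (hf.norm.integrable_sq).sub (hre.const_mul 2)
  rw [integral_add hA hg.norm.integrable_sq,
    integral_sub hf.norm.integrable_sq (hre.const_mul 2), integral_const_mul]
  have := integral_re (𝕜 := ℂ) hmul
  rw [show (∫ x, (f x * starRingEnd ℂ (g x)).re) = (∫ x, f x * starRingEnd ℂ (g x)).re from this]
  rfl

/-- Decomposition of the action:
`E(𝐮,𝐯) - ω Q(𝐮,𝐯) = J_ω(𝐮) + (1/2)‖v₁ - iωu₁‖² + (1/2)‖v₂ - 2iωu₂‖²`. -/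
theorem stmt_11 {N : ℕ} (hN : N = 2 ∨ N = 3) (m₁ m₂ ω : ℝ)
    (hm₁ : 0 < m₁) (hm₂ : 0 < m₂)
    (u v : (Sp N → ℂ) × (Sp N → ℂ)) (hu : Admissible u) (hv : SqInt v) :
    Efun m₁ m₂ u v - ω * Qfun u v
      = Jom m₁ m₂ ω u
        + (1/2) * nsq (fun x => v.1 x - Complex.I * (ω : ℂ) * u.1 x)
        + (1/2) * nsq (fun x => v.2 x - 2 * (Complex.I * (ω : ℂ)) * u.2 x) := by
  have h1 := nsq_sub v.1 (fun x => Complex.I * (ω : ℂ) * u.1 x) hv.1 (hu.2.2.1.const_mul _)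
  have h2 := nsq_sub v.2 (fun x => 2 * (Complex.I * (ω : ℂ)) * u.2 x) hv.2
    (hu.2.2.2.1.const_mul _)
  have n1 : nsq (fun x => Complex.I * (ω : ℂ) * u.1 x) = ω^2 * nsq u.1 := by
    rw [nsq, nsq, ← integral_const_mul]
    congr 1; ext x
    rw [norm_mul, mul_pow, norm_mul]
    simp [Complex.norm_I]
  have n2 : nsq (fun x => 2 * (Complex.I * (ω : ℂ)) * u.2 x) = 4 * ω^2 * nsq u.2 := by
    rw [nsq, nsq, ← integral_const_mul]
    congr 1; ext x
    rw [norm_mul, mul_pow, norm_mul, norm_mul]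
    simp only [Complex.norm_I, Complex.norm_real, Real.norm_eq_abs,
      Complex.norm_ofNat]
    rw [← _root_.sq_abs ω]; ring
  have c1 : (∫ x, v.1 x * starRingEnd ℂ (Complex.I * (ω : ℂ) * u.1 x)).re
      = ω * (∫ x, v.1 x * starRingEnd ℂ (Complex.I * u.1 x)).re := by
    have : ∀ x, v.1 x * starRingEnd ℂ (Complex.I * (ω : ℂ) * u.1 x)
        = (ω : ℂ) * (v.1 x * starRingEnd ℂ (Complex.I * u.1 x)) := by
      intro x
      simp only [map_mul, Complex.conj_ofReal, Complex.conj_I]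
      ring
    simp_rw [this]
    rw [integral_const_mul, Complex.mul_re]
    simp
  have c2 : (∫ x, v.2 x * starRingEnd ℂ (2 * (Complex.I * (ω : ℂ)) * u.2 x)).re
      = 2 * ω * (∫ x, v.2 x * starRingEnd ℂ (Complex.I * u.2 x)).re := by
    have : ∀ x, v.2 x * starRingEnd ℂ (2 * (Complex.I * (ω : ℂ)) * u.2 x)
        = ((2 * ω : ℝ) : ℂ) * (v.2 x * starRingEnd ℂ (Complex.I * u.2 x)) := by
      intro x
      simp only [map_mul, Complex.conj_ofReal, Complex.conj_I, map_ofNat, Complex.ofReal_mul,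
        Complex.ofReal_ofNat]
      ring
    simp_rw [this]
    rw [integral_const_mul, Complex.mul_re]
    simp
  simp only [Efun, Jom, Mom, Kfun, Mfun, Lfun, Qfun] at *
  rw [h1, h2, n1, n2, c1, c2]
  ring

end
end

section
/- Let β > 1 be a real number and define g(s) = s^β − 1 − β(s−1) − (β(β−1)/2)·s^{β−1}·(s−1)² for s ∈ (0,∞). Then g(s) > 0 for all s ∈ (0,1). -/
open MeasureTheory Complex

noncomputable section

/-- For `β > 1`, the function
`g(s) = s^β - 1 - β(s-1) - (β(β-1)/2) s^{β-1} (s-1)²` is positive on `(0,1)`. -/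
theorem stmt_15 (β : ℝ) (hβ : 1 < β) (s : ℝ) (hs0 : 0 < s) (hs1 : s < 1) :
    0 < s ^ β - 1 - β * (s - 1) - β * (β - 1) / 2 * s ^ (β - 1) * (s - 1) ^ 2 := by
  have hβ0 : (0:ℝ) < β := by linarith
  have hβ1 : (0:ℝ) < β - 1 := by linarith
  set a := s ^ β with ha
  set b := s ^ (β - 1) with hb
  have hbs : b * s = a := by
    rw [ha, hb]
    rw [show β = (β - 1) + 1 by ring, Real.rpow_add hs0, Real.rpow_one]
    norm_num
  have hbpos : 0 < b := Real.rpow_pos_of_pos hs0 _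
  have hmem : ∀ t ∈ Set.uIcc s 1, (0:ℝ) < t := by
    intro t ht
    rcases Set.mem_uIcc.1 ht with h' | h' <;> linarith [h'.1]
  have h0not : (0:ℝ) ∉ Set.uIcc s (1:ℝ) := fun h => absurd (hmem 0 h) (lt_irrefl 0)
  -- continuity of t ↦ t^(β-2) on uIcc
  have hcont2 : ContinuousOn (fun t : ℝ => t ^ (β - 2)) (Set.uIcc s 1) :=
    ContinuousOn.rpow_const continuousOn_id
      (fun t ht => Or.inl (ne_of_gt (hmem t ht)))
  have hcontJ : ContinuousOn (fun t : ℝ => (t - s) * (t ^ (β - 2) - b)) (Set.uIcc s 1) :=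
    ((continuousOn_id.sub continuousOn_const).mul (hcont2.sub continuousOn_const))
  -- positivity of the main integral
  have hJpos : 0 < ∫ t in s..(1:ℝ), (t - s) * (t ^ (β - 2) - b) := by
    apply intervalIntegral.intervalIntegral_pos_of_pos_on
      (hcontJ.intervalIntegrable)
    · intro t ht
      have hts : s < t := ht.1
      have ht1 : t < 1 := ht.2
      have ht0 : 0 < t := lt_trans hs0 hts
      have hkey : b < t ^ (β - 2) := by
        rcases le_or_gt β 2 with h2 | h2
        · have h1 : b < 1 := Real.rpow_lt_one hs0.le hs1 hβ1
          have h2' : (1:ℝ) ≤ t ^ (β - 2) :=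
            Real.one_le_rpow_of_pos_of_le_one_of_nonpos ht0 ht1.le (by linarith)
          linarith
        · have hs2 : s ^ (β - 2) ≤ t ^ (β - 2) :=
            Real.rpow_le_rpow hs0.le hts.le (by linarith)
          have : b = s ^ (β - 2) * s := by
            rw [hb, show β - 1 = (β - 2) + 1 by ring, Real.rpow_add hs0, Real.rpow_one]
          have hlt : s ^ (β - 2) * s < s ^ (β - 2) := by
            have := Real.rpow_pos_of_pos hs0 (β - 2)
            nlinarith
          linarith
      have h1 := sub_pos.2 hkey
      have h2 := sub_pos.2 hts
      exact mul_pos h2 h1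
    · exact hs1
  -- compute the integral
  have hA : ∫ t in s..(1:ℝ), t ^ (β - 1) = (1 - a) / β := by
    rw [integral_rpow (Or.inl (by linarith))]
    rw [show β - 1 + 1 = β by ring, Real.one_rpow, ha]
  have hB : ∫ t in s..(1:ℝ), t ^ (β - 2) = (1 - b) / (β - 1) := by
    rw [integral_rpow (Or.inr ⟨by intro h; linarith [h], h0not⟩)]
    rw [show β - 2 + 1 = β - 1 by ring, Real.one_rpow, hb]
  have hC : ∫ t in s..(1:ℝ), t = (1 - s ^ 2) / 2 := by
    rw [integral_id]; norm_num
  have hD : ∫ t in s..(1:ℝ), (1:ℝ) = 1 - s := by simp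
  have hsplit : (∫ t in s..(1:ℝ), (t - s) * (t ^ (β - 2) - b)) =
      (∫ t in s..(1:ℝ), t ^ (β - 1)) - s * (∫ t in s..(1:ℝ), t ^ (β - 2))
        - b * (∫ t in s..(1:ℝ), t) + s * b * (∫ t in s..(1:ℝ), (1:ℝ)) := by
    have hi1 : IntervalIntegrable (fun t : ℝ => t ^ (β - 1)) volume s 1 :=
      (ContinuousOn.rpow_const continuousOn_id
        (fun t ht => Or.inl (ne_of_gt (hmem t ht)))).intervalIntegrable
    have hi2 : IntervalIntegrable (fun t : ℝ => s * t ^ (β - 2)) volume s 1 :=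
      (continuousOn_const.mul hcont2).intervalIntegrable
    have hi3 : IntervalIntegrable (fun t : ℝ => b * t) volume s 1 :=
      (continuousOn_const.mul continuousOn_id).intervalIntegrable
    have hi4 : IntervalIntegrable (fun _ : ℝ => s * b) volume s 1 :=
      intervalIntegrable_const
    have hcongr : (∫ t in s..(1:ℝ), (t - s) * (t ^ (β - 2) - b)) =
        ∫ t in s..(1:ℝ), (t ^ (β - 1) - s * t ^ (β - 2) - b * t + s * b) := by
      apply intervalIntegral.integral_congr
      intro t ht
      have ht0 : 0 < t := hmem t ht
      have h1 : t ^ (β - 1) = t ^ (β - 2) * t := by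
        rw [show β - 1 = (β - 2) + 1 by ring, Real.rpow_add ht0, Real.rpow_one]
      simp only
      rw [h1]; ring
    rw [hcongr]
    rw [intervalIntegral.integral_add ((hi1.sub hi2).sub hi3) hi4,
        intervalIntegral.integral_sub (hi1.sub hi2) hi3,
        intervalIntegral.integral_sub hi1 hi2,
        intervalIntegral.integral_const_mul, intervalIntegral.integral_const_mul,
        intervalIntegral.integral_const]
    simp [hD]
    ring
  rw [hsplit, hA, hB, hC, hD] at hJpos
  have hfinal : s ^ β - 1 - β * (s - 1) - β * (β - 1) / 2 * s ^ (β - 1) * (s - 1) ^ 2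
      = β * (β - 1) * ((1 - a) / β - s * ((1 - b) / (β - 1)) - b * ((1 - s ^ 2) / 2)
          + s * b * (1 - s)) := by
    rw [← ha, ← hb, ← hbs]
    field_simp
    ring
  rw [hfinal]
  positivity

end
end

section
/- Let α > 0 be a real number. For every λ ∈ (0,1): (α+2)·λ^{α+2}·(λ^{−α} + λ^{α} − 2) < α·(α·λ^{α+2} − (α+2)·λ^{α} + 2). -/
open MeasureTheory Complex

noncomputable section

lemma amgm2 (x p q w1 w2 : ℝ) (hx : 0 < x) (hw1 : 0 ≤ w1) (hw2 : 0 ≤ w2)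
    (hw : 0 < w1 + w2) :
    (w1 + w2) * x ^ ((w1 * p + w2 * q) / (w1 + w2)) ≤ w1 * x ^ p + w2 * x ^ q := by
  have hL : ∀ t : ℝ, x ^ t = Real.exp (t * Real.log x) := fun t => by
    rw [Real.rpow_def_of_pos hx, mul_comm]
  have h := convexOn_exp.2 (Set.mem_univ (p * Real.log x)) (Set.mem_univ (q * Real.log x))
    (div_nonneg hw1 hw.le) (div_nonneg hw2 hw.le) (by field_simp)
  simp only [smul_eq_mul] at h
  rw [hL, hL, hL]
  have key : (w1 * p + w2 * q) / (w1 + w2) * Real.log x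
      = w1 / (w1 + w2) * (p * Real.log x) + w2 / (w1 + w2) * (q * Real.log x) := by
    field_simp
  rw [key]
  calc (w1 + w2) * Real.exp (w1 / (w1 + w2) * (p * Real.log x) + w2 / (w1 + w2) * (q * Real.log x))
      ≤ (w1 + w2) * (w1 / (w1 + w2) * Real.exp (p * Real.log x) + w2 / (w1 + w2) * Real.exp (q * Real.log x)) := by
        exact mul_le_mul_of_nonneg_left h hw.le
    _ = w1 * Real.exp (p * Real.log x) + w2 * Real.exp (q * Real.log x) := by field_simp

lemma amgm2' (x p q w1 w2 : ℝ) (hx : 0 < x) (hx1 : x ≠ 1) (hpq : p ≠ q)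
    (hw1 : 0 < w1) (hw2 : 0 < w2) :
    (w1 + w2) * x ^ ((w1 * p + w2 * q) / (w1 + w2)) < w1 * x ^ p + w2 * x ^ q := by
  have hw : 0 < w1 + w2 := by linarith
  have hL : ∀ t : ℝ, x ^ t = Real.exp (t * Real.log x) := fun t => by
    rw [Real.rpow_def_of_pos hx, mul_comm]
  have hlog : Real.log x ≠ 0 := Real.log_ne_zero_of_pos_of_ne_one hx hx1
  have hne : p * Real.log x ≠ q * Real.log x := by
    intro h; exact hpq (mul_right_cancel₀ hlog h)
  have h := strictConvexOn_exp.2 (Set.mem_univ (p * Real.log x)) (Set.mem_univ (q * Real.log x))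
    hne (div_pos hw1 hw) (div_pos hw2 hw) (by field_simp)
  simp only [smul_eq_mul] at h
  rw [hL, hL, hL]
  have key : (w1 * p + w2 * q) / (w1 + w2) * Real.log x
      = w1 / (w1 + w2) * (p * Real.log x) + w2 / (w1 + w2) * (q * Real.log x) := by
    field_simp
  rw [key]
  calc (w1 + w2) * Real.exp (w1 / (w1 + w2) * (p * Real.log x) + w2 / (w1 + w2) * (q * Real.log x))
      < (w1 + w2) * (w1 / (w1 + w2) * Real.exp (p * Real.log x) + w2 / (w1 + w2) * Real.exp (q * Real.log x)) := by
        exact mul_lt_mul_of_pos_left h hw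
    _ = w1 * Real.exp (p * Real.log x) + w2 * Real.exp (q * Real.log x) := by field_simp

/-- For `α > 0` and `λ ∈ (0,1)`:
`(α+2) λ^{α+2} (λ^{-α} + λ^α - 2) < α (α λ^{α+2} - (α+2) λ^α + 2)`. -/
theorem stmt_16 (α : ℝ) (hα : 0 < α) (lam : ℝ) (h0 : 0 < lam) (h1 : lam < 1) :
    (α + 2) * lam ^ (α + 2) * (lam ^ (-α) + lam ^ α - 2)
      < α * (α * lam ^ (α + 2) - (α + 2) * lam ^ α + 2) := by
  set f : ℝ → ℝ := fun x =>
    (α^2+2*α+4) * x ^ (α+2) - α*(α+2) * x ^ α - (α+2) * x ^ (2:ℝ)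
      - (α+2) * x ^ (2*α+2) + 2*α with hfdef
  have hD : ∀ x : ℝ, 0 < x → HasDerivAt f
      ((α^2+2*α+4)*((α+2)*x^(α+1)) - α*(α+2)*(α*x^(α-1)) - (α+2)*(2*x^((1:ℝ)))
        - (α+2)*((2*α+2)*x^(2*α+1))) x := by
    intro x hx
    have h1 := (Real.hasDerivAt_rpow_const (x:=x) (p:=α+2) (Or.inl hx.ne')).const_mul (α^2+2*α+4)
    have h2 := (Real.hasDerivAt_rpow_const (x:=x) (p:=α) (Or.inl hx.ne')).const_mul (α*(α+2))
    have h3 := (Real.hasDerivAt_rpow_const (x:=x) (p:=(2:ℝ)) (Or.inl hx.ne')).const_mul (α+2)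
    have h4 := (Real.hasDerivAt_rpow_const (x:=x) (p:=2*α+2) (Or.inl hx.ne')).const_mul (α+2)
    have hsum := (((h1.sub h2).sub h3).sub h4).add_const (2*α)
    rw [show α+2-1 = α+1 by ring, show (2:ℝ)-1 = 1 by norm_num,
      show 2*α+2-1 = 2*α+1 by ring] at hsum
    exact hsum
  have hderivneg : ∀ x ∈ interior (Set.Icc lam 1), deriv f x < 0 := by
    intro x hx
    rw [interior_Icc] at hx
    have hxpos : 0 < x := lt_trans h0 hx.1
    have hxlt : x < 1 := hx.2
    rw [(hD x hxpos).deriv]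
    -- strict AM-GM: 2*x^1 + (2α+2)*x^(2α+1) > (2+(2α+2)) * x^e
    have key1 := amgm2' x 1 (2*α+1) 2 (2*α+2) hxpos hxlt.ne (by intro h; linarith)
      (by norm_num) (by linarith)
    set e : ℝ := (2 * 1 + (2*α+2) * (2*α+1)) / (2 + (2*α+2)) with hedef
    -- nonstrict AM-GM: α²*x^(α-1) + (2α+4)*x^e ≥ (α²+2α+4) * x^(α+1)
    have key2 := amgm2 x (α-1) e (α^2) (2*α+4) hxpos (by positivity) (by linarith)
      (by positivity)
    have hexp : (α^2 * (α-1) + (2*α+4) * e) / (α^2 + (2*α+4)) = α + 1 := by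
      rw [hedef]; field_simp; ring
    rw [hexp] at key2
    have h22 : (2:ℝ) + (2*α+2) = 2*α+4 := by ring
    rw [h22] at key1
    have hx1 : x ^ (1:ℝ) = x := Real.rpow_one x
    nlinarith [key1, key2, Real.rpow_pos_of_pos hxpos (α+1), hα]
  have hcont : ContinuousOn f (Set.Icc lam 1) := by
    intro x hx
    exact ((hD x (lt_of_lt_of_le h0 hx.1)).continuousAt).continuousWithinAt
  have hanti : StrictAntiOn f (Set.Icc lam 1) :=
    strictAntiOn_of_deriv_neg (convex_Icc lam 1) hcont hderivneg
  have hflam : f 1 < f lam :=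
    hanti (Set.left_mem_Icc.2 h1.le) (Set.right_mem_Icc.2 h1.le) h1
  have hf1 : f 1 = 0 := by simp [hfdef]; ring
  rw [hf1] at hflam
  have e1 : lam ^ (α+2) * lam ^ (-α) = lam ^ (2:ℝ) := by
    rw [← Real.rpow_add h0]; norm_num
  have e2 : lam ^ (α+2) * lam ^ α = lam ^ (2*α+2) := by
    rw [← Real.rpow_add h0]; ring_nf
  simp only [hfdef] at hflam
  nlinarith [hflam, e1, e2]

end
end
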